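/- arXiv:2005.02027 — 6 statements merged into one kernel-verified Lean document; each statement's English description precedes it below -/
import Mathlib

section
/- For all integers ω0 ≥ 2 and ω1 ≥ 2, the limit as n → ∞ of (1/n)·|{M : 2 ≤ M ≤ n, ‖M‖_∞ < ω0 and ‖M−1‖_∞ < ω1}| exists and equals the convergent infinite product ∏_{p prime} (1 − p^{−ω0} − p^{−ω1}). -/
open scoped Classical
open Filter

/-- The largest exponent appearing in the prime factorization of `N`
(`0` for `N = 0, 1`). -/
noncomputable def normInf (N : ℕ) : ℕ :=
  N.factorization.support.sup fun p => N.factorization p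

/-!
For every prime `p`, the condition `‖M‖_∞ < ω0 ∧ ‖M - 1‖_∞ < ω1` asks that `M` avoid the classes
`0 mod p ^ ω0` and `1 mod p ^ ω1`, which are disjoint. Imposing this only for the primes `p ≤ z`
gives a periodic condition whose density is, by the Chinese remainder theorem, the partial product
`D z = ∏_{p ≤ z} (1 - p ^ (-ω0) - p ^ (-ω1))`. An `M ≤ n` satisfying it for `p ≤ z` but not for
some prime `p > z` has `p ^ 2 ∣ M` or `p ^ 2 ∣ M - 1`, and there are at most `4 n / (z + 1)` such
`M`. So for large `n` the proportion is within `O(1 / z)` of `D z`, and `D z` tends to the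
infinite product, which converges because `∑ p ^ (-2) < ∞`.
-/

open Finset Function Nat Topology

theorem Nat.count_mul_add_of_periodic {c : ℕ → Prop} [DecidablePred c] {Q : ℕ}
    (hc : Periodic c Q) (k n : ℕ) : count c (Q * k + n) = k * count c Q + count c n := by
  induction k generalizing n with
  | zero => simp
  | succ k ih =>
    have hshift : (fun j => c (Q + j)) = c := funext fun j => by rw [add_comm, hc]
    rw [mul_add_one, add_assoc, ih, count_add]
    simp only [hshift]
    ring

theorem Nat.abs_count_sub_le_of_periodic {c : ℕ → Prop} [DecidablePred c] {Q : ℕ}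
    (hQ : Q ≠ 0) (hc : Periodic c Q) (n : ℕ) :
    |(count c n : ℝ) - n * (count c Q / Q)| ≤ Q := by
  obtain ⟨k, r, hrQ, rfl⟩ : ∃ k r, r < Q ∧ n = Q * k + r :=
    ⟨n / Q, n % Q, mod_lt n (pos_of_ne_zero hQ), (div_add_mod n Q).symm⟩
  have hQ' : (0 : ℝ) < Q := by positivity
  have hrQ' : (r : ℝ) < Q := by exact_mod_cast hrQ
  have hcr : (count c r : ℝ) ≤ r := by exact_mod_cast count_le c
  have hdens : (count c Q / Q : ℝ) ≤ 1 := (div_le_one hQ').2 (by exact_mod_cast count_le c)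
  have hsplit : ((Q : ℝ) * k + r) * (count c Q / Q) = k * count c Q + r * (count c Q / Q) := by
    field_simp
  rw [count_mul_add_of_periodic hc]
  push_cast
  rw [hsplit, abs_le]
  have hr_le : (r : ℝ) * (count c Q / Q) ≤ r := mul_le_of_le_one_right (by positivity) hdens
  have hr_nonneg : (0 : ℝ) ≤ r * (count c Q / Q) := by positivity
  constructor <;> linarith

theorem Function.Periodic.forall_mem {ι : Type*} {s : Finset ι} {q : ι → ℕ} {c : ι → ℕ → Prop}
    (hc : ∀ i ∈ s, Periodic (c i) (q i)) :
    Periodic (fun M => ∀ i ∈ s, c i M) (∏ i ∈ s, q i) := fun M =>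
  propext <| forall₂_congr fun i hi => by
    obtain ⟨k, hk⟩ := dvd_prod_of_mem q hi
    have := (hc i hi).nat_mul k M
    rw [Nat.cast_id] at this
    rw [hk, mul_comm, this]

theorem Nat.count_and_of_periodic {a b : ℕ} (hab : a.Coprime b) {c d : ℕ → Prop}
    [DecidablePred c] [DecidablePred d] (hc : Periodic c a) (hd : Periodic d b) :
    count (fun M => c M ∧ d M) (a * b) = count c a * count d b := by
  rcases Nat.eq_zero_or_pos a with rfl | ha
  · simp
  rcases Nat.eq_zero_or_pos b with rfl | hb
  · simp
  simp only [count_eq_card_filter_range, ← card_product]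
  have hcr (x : ℕ × ℕ) : chineseRemainder hab x.1 x.2 % a = x.1 % a ∧
      chineseRemainder hab x.1 x.2 % b = x.2 % b := (chineseRemainder hab x.1 x.2).2
  refine card_nbij' (fun M => (M % a, M % b)) (fun x => chineseRemainder hab x.1 x.2)
    ?_ ?_ ?_ ?_
  · intro M hM
    simp only [coe_filter, mem_range, Set.mem_ofPred_eq, coe_product, Set.mem_prod] at hM ⊢
    exact ⟨⟨mod_lt M ha, (hc.map_mod_nat M).symm ▸ hM.2.1⟩,
      ⟨mod_lt M hb, (hd.map_mod_nat M).symm ▸ hM.2.2⟩⟩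
  · rintro ⟨x, y⟩ hxy
    simp only [coe_filter, mem_range, Set.mem_ofPred_eq, coe_product, Set.mem_prod] at hxy ⊢
    obtain ⟨hx, hy⟩ := hcr (x, y)
    refine ⟨chineseRemainder_lt_mul hab x y ha.ne' hb.ne', ?_, ?_⟩
    · rw [← hc.map_mod_nat]
      simpa [hx, mod_eq_of_lt hxy.1.1] using hxy.1.2
    · rw [← hd.map_mod_nat]
      simpa [hy, mod_eq_of_lt hxy.2.1] using hxy.2.2
  · intro M hM
    simp only [coe_filter, mem_range, Set.mem_ofPred_eq] at hM
    have hM' := chineseRemainder_modEq_unique hab (mod_modEq M a).symm (mod_modEq M b).symm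
    exact (hM'.eq_of_lt_of_lt hM.1 (chineseRemainder_lt_mul hab _ _ ha.ne' hb.ne')).symm
  · rintro ⟨x, y⟩ hxy
    simp only [coe_product, Set.mem_prod, coe_filter, mem_range, Set.mem_ofPred_eq] at hxy
    obtain ⟨hx, hy⟩ := hcr (x, y)
    simp only [hx, hy, mod_eq_of_lt hxy.1.1, mod_eq_of_lt hxy.2.1]

theorem Nat.count_forall_of_periodic {ι : Type*} (s : Finset ι) {q : ι → ℕ}
    {c : ι → ℕ → Prop} [∀ i, DecidablePred (c i)]
    (hq : (s : Set ι).Pairwise (Coprime on q)) (hc : ∀ i ∈ s, Periodic (c i) (q i)) :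
    count (fun M => ∀ i ∈ s, c i M) (∏ i ∈ s, q i) = ∏ i ∈ s, count (c i) (q i) := by
  classical
  induction s using Finset.induction_on with
  | empty => simp
  | insert a s ha ih =>
    have hcop : (q a).Coprime (∏ i ∈ s, q i) := Coprime.prod_right fun i hi =>
      hq (mem_insert_self a s) (mem_insert_of_mem hi) (ne_of_mem_of_not_mem hi ha).symm
    rw [prod_insert ha, prod_insert ha,
      ← ih (hq.mono (by simp)) fun i hi => hc i (mem_insert_of_mem hi),
      ← count_and_of_periodic hcop (hc a (mem_insert_self a s))
        (Periodic.forall_mem fun i hi => hc i (mem_insert_of_mem hi))]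
    simp only [forall_mem_insert]

-- Stated additively, so that no truncated subtraction occurs.
theorem Nat.count_not_modEq_and_not_modEq {a b u v : ℕ} (ha : a ≠ 0) (hb : b ≠ 0)
    (hdisj : ∀ M, M ≡ u [MOD a] → ¬ M ≡ v [MOD b]) :
    count (fun M => ¬ M ≡ u [MOD a] ∧ ¬ M ≡ v [MOD b]) (a * b) + b + a = a * b := by
  have hu : count (· ≡ u [MOD a]) (a * b) = b := by
    simp [count_modEq_card _ (Nat.pos_of_ne_zero ha), ha]
  have hv : count (· ≡ v [MOD b]) (a * b) = a := by
    simp [count_modEq_card _ (Nat.pos_of_ne_zero hb), hb]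
  have hsplit := card_filter_add_card_filter_not (s := range (a * b))
    (fun M => M ≡ u [MOD a] ∨ M ≡ v [MOD b])
  rw [filter_or, card_union_of_disjoint (disjoint_filter.2 fun M _ => hdisj M)] at hsplit
  simp only [count_eq_card_filter_range, not_or] at hu hv hsplit ⊢
  rw [card_range] at hsplit
  omega

theorem Filter.Tendsto.of_forall_eventually_dist_le {α ι κ : Type*} [PseudoMetricSpace α]
    {l : Filter ι} {l' : Filter κ} [l'.NeBot] {a : ι → α} {d : κ → α} {e : κ → ℝ} {L : α}
    (hd : Tendsto d l' (𝓝 L)) (he : Tendsto e l' (𝓝 0))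
    (h : ∀ z, ∀ᶠ n in l, dist (a n) (d z) ≤ e z) : Tendsto a l (𝓝 L) := by
  refine Metric.tendsto_nhds.2 fun ε hε => ?_
  obtain ⟨z, hdz, hez⟩ := ((Metric.tendsto_nhds.1 hd (ε / 2) (half_pos hε)).and
    (he.eventually (gt_mem_nhds (half_pos hε)))).exists
  filter_upwards [h z] with n hn
  linarith [dist_triangle (a n) (d z) L]

theorem HasProd.tendsto_prod_primesLE {M : Type*} [CommMonoid M] [TopologicalSpace M]
    {f : ℕ → M} {L : M} (h : HasProd (fun p : Nat.Primes => f p) L) :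
    Tendsto (fun z => ∏ p ∈ primesLE z, f p) atTop (𝓝 L) := by
  have := (hasProd_subtype_iff_mulIndicator (f := f) (s := {p | p.Prime}).1 h).tendsto_prod_nat
  have hpartial (n : ℕ) : ∏ i ∈ range n, Set.mulIndicator {p | p.Prime} f i
      = ∏ p ∈ primesBelow n, f p :=
    prod_mulIndicator_eq_prod_filter (range n) (fun _ => f) (fun _ => {p | p.Prime}) id
  simp only [hpartial] at this
  exact (tendsto_add_atTop_iff_nat 1).2 this

-- Congruences rather than `p ^ ω1 ∣ M - 1`, which truncates at `M = 0` and would spoil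
-- periodicity; the two readings agree for `M ≠ 0` (`admissibleAt_iff`).
def AdmissibleAt (ω0 ω1 p M : ℕ) : Prop :=
  ¬ M ≡ 0 [MOD p ^ ω0] ∧ ¬ M ≡ 1 [MOD p ^ ω1]

def Sieved (ω0 ω1 z M : ℕ) : Prop :=
  ∀ p ∈ primesLE z, AdmissibleAt ω0 ω1 p M

instance (ω0 ω1 p : ℕ) : DecidablePred (AdmissibleAt ω0 ω1 p) := fun _ => instDecidableAnd

instance (ω0 ω1 z : ℕ) : DecidablePred (Sieved ω0 ω1 z) := fun _ => decidableDforallFinset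

def sieveModulus (ω0 ω1 z : ℕ) : ℕ :=
  ∏ p ∈ primesLE z, p ^ ω0 * p ^ ω1

noncomputable def localDensity (ω0 ω1 p : ℕ) : ℝ :=
  1 - 1 / (p : ℝ) ^ ω0 - 1 / (p : ℝ) ^ ω1

theorem periodic_admissibleAt (ω0 ω1 p : ℕ) :
    Periodic (AdmissibleAt ω0 ω1 p) (p ^ ω0 * p ^ ω1) := fun M => by
  simp [AdmissibleAt, Nat.ModEq]

theorem periodic_sieved (ω0 ω1 z : ℕ) : Periodic (Sieved ω0 ω1 z) (sieveModulus ω0 ω1 z) :=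
  Periodic.forall_mem fun p _ => periodic_admissibleAt ω0 ω1 p

theorem count_admissibleAt {ω0 ω1 p : ℕ} (hp : p.Prime) (h0 : ω0 ≠ 0) (h1 : ω1 ≠ 0) :
    count (AdmissibleAt ω0 ω1 p) (p ^ ω0 * p ^ ω1) + p ^ ω1 + p ^ ω0 = p ^ ω0 * p ^ ω1 :=
  count_not_modEq_and_not_modEq (pow_ne_zero _ hp.ne_zero) (pow_ne_zero _ hp.ne_zero)
    fun _ hM0 hM1 => hp.not_dvd_one <| modEq_zero_iff_dvd.1 <|
      (hM1.of_dvd (dvd_pow_self p h1)).symm.trans (hM0.of_dvd (dvd_pow_self p h0))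

theorem count_sieved_div_sieveModulus {ω0 ω1 : ℕ} (h0 : ω0 ≠ 0) (h1 : ω1 ≠ 0) (z : ℕ) :
    (count (Sieved ω0 ω1 z) (sieveModulus ω0 ω1 z) : ℝ) / sieveModulus ω0 ω1 z
      = ∏ p ∈ primesLE z, localDensity ω0 ω1 p := by
  have hcount : count (Sieved ω0 ω1 z) (sieveModulus ω0 ω1 z)
      = ∏ p ∈ primesLE z, count (AdmissibleAt ω0 ω1 p) (p ^ ω0 * p ^ ω1) := by
    refine count_forall_of_periodic (primesLE z) (q := fun p => p ^ ω0 * p ^ ω1)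
      (c := AdmissibleAt ω0 ω1) (fun p hp r hr hpr => ?_)
      (fun p _ => periodic_admissibleAt ω0 ω1 p)
    simp only [onFun, ← pow_add]
    exact ((coprime_primes (prime_of_mem_primesLE hp) (prime_of_mem_primesLE hr)).2 hpr).pow _ _
  rw [hcount, sieveModulus, cast_prod, cast_prod, ← prod_div_distrib]
  refine prod_congr rfl fun p hp => ?_
  have hp := prime_of_mem_primesLE hp
  have hcast : (count (AdmissibleAt ω0 ω1 p) (p ^ ω0 * p ^ ω1) : ℝ) + (p : ℝ) ^ ω1 + (p : ℝ) ^ ω0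
      = (p : ℝ) ^ ω0 * (p : ℝ) ^ ω1 := by exact_mod_cast count_admissibleAt hp h0 h1
  have : (p : ℝ) ≠ 0 := by exact_mod_cast hp.ne_zero
  rw [localDensity]
  push_cast
  field_simp
  linarith

theorem normInf_lt_iff {M ω : ℕ} (hM : M ≠ 0) (hω : ω ≠ 0) :
    normInf M < ω ↔ ∀ p, p.Prime → ¬ p ^ ω ∣ M := by
  simp only [normInf, Finset.sup_lt_iff (Nat.pos_of_ne_zero hω), Finsupp.mem_support_iff]
  refine forall_congr' fun p => ?_
  by_cases hp : p.Prime
  · rw [hp.pow_dvd_iff_le_factorization hM]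
    simp only [hp, true_implies, not_le]
    omega
  · simp [factorization_eq_zero_of_not_prime M hp, hp]

theorem admissibleAt_iff {ω0 ω1 p M : ℕ} (hM : M ≠ 0) :
    AdmissibleAt ω0 ω1 p M ↔ ¬ p ^ ω0 ∣ M ∧ ¬ p ^ ω1 ∣ M - 1 := by
  rw [AdmissibleAt, modEq_zero_iff_dvd, ModEq.comm, modEq_iff_dvd' (one_le_iff_ne_zero.2 hM)]

theorem normInf_lt_and_normInf_pred_lt_iff {ω0 ω1 M : ℕ} (h0 : ω0 ≠ 0) (h1 : ω1 ≠ 0)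
    (hM : 2 ≤ M) :
    normInf M < ω0 ∧ normInf (M - 1) < ω1 ↔ ∀ p, p.Prime → AdmissibleAt ω0 ω1 p M := by
  simp only [normInf_lt_iff (by omega : M ≠ 0) h0, normInf_lt_iff (by omega : M - 1 ≠ 0) h1,
    admissibleAt_iff (by omega : M ≠ 0)]
  exact ⟨fun h p hp => ⟨h.1 p hp, h.2 p hp⟩,
    fun h => ⟨fun p hp => (h p hp).1, fun p hp => (h p hp).2⟩⟩

theorem exists_sq_dvd_of_sieved {ω0 ω1 z M : ℕ} (h0 : 2 ≤ ω0) (h1 : 2 ≤ ω1) (hM : 2 ≤ M)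
    (hs : Sieved ω0 ω1 z M) (hbad : ¬ (normInf M < ω0 ∧ normInf (M - 1) < ω1)) :
    ∃ k, z < k ∧ (k ^ 2 ∣ M ∨ k ^ 2 ∣ M - 1) := by
  rw [normInf_lt_and_normInf_pred_lt_iff (by omega) (by omega) hM] at hbad
  push Not at hbad
  obtain ⟨p, hp, hpM⟩ := hbad
  have hzp : z < p := by
    by_contra! hpz
    exact hpM (hs p (mem_primesLE.2 ⟨hpz, hp⟩))
  rw [admissibleAt_iff (by omega), not_and_or, not_not, not_not] at hpM
  exact ⟨p, hzp, hpM.imp (dvd_trans (pow_dvd_pow p h0)) (dvd_trans (pow_dvd_pow p h1))⟩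

theorem card_filter_exists_sq_dvd_le (z n : ℕ) :
    (#{M ∈ Ico 2 n | ∃ k, z < k ∧ (k ^ 2 ∣ M ∨ k ^ 2 ∣ M - 1)} : ℝ) ≤ 4 * n / (z + 1) := by
  set A : ℕ → Finset ℕ := fun k => {m ∈ Ioc 0 n | k ^ 2 ∣ m}
  have hA (k : ℕ) : #(A k) = n / k ^ 2 := Nat.Ioc_filter_dvd_card_eq_div n _
  have hsub : {M ∈ Ico 2 n | ∃ k, z < k ∧ (k ^ 2 ∣ M ∨ k ^ 2 ∣ M - 1)}
      ⊆ (Ioo z n).biUnion fun k => A k ∪ (A k).image (· + 1) := by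
    intro M hM
    simp only [mem_filter, mem_Ico] at hM
    obtain ⟨⟨h2M, hMn⟩, k, hzk, hk⟩ := hM
    simp only [mem_biUnion, mem_Ioo, mem_union, mem_image, A, mem_filter, mem_Ioc]
    have hk_le (m : ℕ) (hm : m ≠ 0) (hkm : k ^ 2 ∣ m) : k ≤ m :=
      (Nat.le_self_pow two_ne_zero k).trans (Nat.le_of_dvd (Nat.pos_of_ne_zero hm) hkm)
    rcases hk with hk | hk
    · exact ⟨k, ⟨hzk, (hk_le M (by omega) hk).trans_lt hMn⟩, Or.inl ⟨⟨by omega, hMn.le⟩, hk⟩⟩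
    · exact ⟨k, ⟨hzk, by have := hk_le (M - 1) (by omega) hk; omega⟩,
        Or.inr ⟨M - 1, ⟨⟨by omega, by omega⟩, hk⟩, by omega⟩⟩
  have hcard : #{M ∈ Ico 2 n | ∃ k, z < k ∧ (k ^ 2 ∣ M ∨ k ^ 2 ∣ M - 1)}
      ≤ ∑ k ∈ Ioo z n, 2 * (n / k ^ 2) := by
    refine (card_le_card hsub).trans (card_biUnion_le.trans (sum_le_sum fun k _ => ?_))
    calc #(A k ∪ (A k).image (· + 1)) ≤ #(A k) + #(A k) :=
          (card_union_le _ _).trans (Nat.add_le_add_left card_image_le _)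
      _ = 2 * (n / k ^ 2) := by rw [hA, two_mul]
  calc (#{M ∈ Ico 2 n | ∃ k, z < k ∧ (k ^ 2 ∣ M ∨ k ^ 2 ∣ M - 1)} : ℝ)
      ≤ ∑ k ∈ Ioo z n, (2 * (n / k ^ 2) : ℕ) := by exact_mod_cast hcard
    _ ≤ ∑ k ∈ Ioo z n, 2 * (n / (k : ℝ) ^ 2) := by
        push_cast
        gcongr with k
        exact_mod_cast Nat.cast_div_le (α := ℝ) (m := n) (n := k ^ 2)
    _ = 2 * n * ∑ k ∈ Ioo z n, ((k : ℝ) ^ 2)⁻¹ := by simp only [mul_sum, div_eq_mul_inv, mul_assoc]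
    _ ≤ 2 * n * (2 / (z + 1)) := by gcongr; exact sum_Ioo_inv_sq_le z n
    _ = 4 * n / (z + 1) := by ring

theorem abs_card_sub_count_sieved_le {ω0 ω1 : ℕ} (h0 : 2 ≤ ω0) (h1 : 2 ≤ ω1) (z n : ℕ) :
    |(#{M ∈ Icc 2 n | normInf M < ω0 ∧ normInf (M - 1) < ω1} : ℝ)
      - count (Sieved ω0 ω1 z) n| ≤ 2 + 4 * n / (z + 1) := by
  set G := {M ∈ Icc 2 n | normInf M < ω0 ∧ normInf (M - 1) < ω1}
  set T := {M ∈ Ico 2 n | ∃ k, z < k ∧ (k ^ 2 ∣ M ∨ k ^ 2 ∣ M - 1)}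
  have hG : G ⊆ insert n {M ∈ range n | Sieved ω0 ω1 z M} := by
    intro M hM
    simp only [G, mem_filter, mem_Icc] at hM
    rw [mem_insert, mem_filter, mem_range]
    rcases hM.1.2.lt_or_eq with hMn | hMn
    · exact Or.inr ⟨hMn, fun p hp => (normInf_lt_and_normInf_pred_lt_iff (by omega) (by omega)
        hM.1.1).1 hM.2 p (prime_of_mem_primesLE hp)⟩
    · exact Or.inl hMn
  have hS : {M ∈ range n | Sieved ω0 ω1 z M} ⊆ range 2 ∪ G ∪ T := by
    intro M hM
    simp only [mem_filter, mem_range] at hM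
    simp only [G, T, mem_union, mem_range, mem_filter, mem_Icc, mem_Ico]
    by_cases h2 : M < 2
    · exact Or.inl (Or.inl h2)
    by_cases hgood : normInf M < ω0 ∧ normInf (M - 1) < ω1
    · exact Or.inl (Or.inr ⟨⟨by omega, hM.1.le⟩, hgood⟩)
    · exact Or.inr ⟨⟨by omega, hM.1⟩, exists_sq_dvd_of_sieved h0 h1 (by omega) hM.2 hgood⟩
  have hGS : #G ≤ count (Sieved ω0 ω1 z) n + 1 := by
    rw [count_eq_card_filter_range]
    exact (card_le_card hG).trans (card_insert_le _ _)
  have hSG : count (Sieved ω0 ω1 z) n ≤ 2 + #G + #T := by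
    rw [count_eq_card_filter_range]
    refine (card_le_card hS).trans ((card_union_le _ _).trans ?_)
    grw [card_union_le, card_range]
  have hT := card_filter_exists_sq_dvd_le z n
  have hpos : (0 : ℝ) ≤ 4 * n / (z + 1) := by positivity
  rw [abs_le]
  constructor
  · have : (count (Sieved ω0 ω1 z) n : ℝ) ≤ 2 + #G + #T := by exact_mod_cast hSG
    linarith
  · have : (#G : ℝ) ≤ count (Sieved ω0 ω1 z) n + 1 := by exact_mod_cast hGS
    linarith

theorem eventually_abs_div_sub_prod_localDensity_le {ω0 ω1 : ℕ} (h0 : 2 ≤ ω0) (h1 : 2 ≤ ω1)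
    (z : ℕ) : ∀ᶠ n : ℕ in atTop,
      |(#{M ∈ Icc 2 n | normInf M < ω0 ∧ normInf (M - 1) < ω1} : ℝ) / n
        - ∏ p ∈ primesLE z, localDensity ω0 ω1 p| ≤ 5 / (z + 1) := by
  set Q := sieveModulus ω0 ω1 z
  have hQ : Q ≠ 0 := prod_ne_zero_iff.2 fun p hp => by
    have := (prime_of_mem_primesLE hp).ne_zero
    positivity
  filter_upwards [eventually_ge_atTop ((Q + 2) * (z + 1)), eventually_gt_atTop 0] with n hnQ hn
  have hperiodic := abs_count_sub_le_of_periodic hQ (periodic_sieved ω0 ω1 z) n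
  rw [count_sieved_div_sieveModulus (by omega) (by omega)] at hperiodic
  have hsieve := abs_card_sub_count_sieved_le h0 h1 z n
  have hn' : (0 : ℝ) < n := by exact_mod_cast hn
  have hnQ' : ((Q : ℝ) + 2) * (z + 1) ≤ n := by exact_mod_cast hnQ
  rw [← mul_le_mul_iff_of_pos_left hn', ← abs_of_pos hn', ← abs_mul, abs_of_pos hn', mul_sub,
    mul_div_cancel₀ _ hn'.ne']
  have hz : (0 : ℝ) < z + 1 := by positivity
  have hQn : (2 + Q : ℝ) ≤ n / (z + 1) := by rw [le_div_iff₀ hz]; linarith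
  calc _ ≤ (2 + 4 * n / (z + 1)) + (Q : ℝ) :=
        (abs_sub_le _ (count (Sieved ω0 ω1 z) n : ℝ) _).trans (add_le_add hsieve hperiodic)
    _ = (2 + Q) + 4 * (n / (z + 1)) := by ring
    _ ≤ n / (z + 1) + 4 * (n / (z + 1)) := by linarith
    _ = n * (5 / (z + 1)) := by ring

theorem multipliable_localDensity {ω0 ω1 : ℕ} (h0 : 2 ≤ ω0) (h1 : 2 ≤ ω1) :
    Multipliable fun p : Nat.Primes => localDensity ω0 ω1 p := by
  have hsum {ω : ℕ} (hω : 2 ≤ ω) : Summable fun p : Nat.Primes => 1 / ((p : ℕ) : ℝ) ^ ω :=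
    (Real.summable_one_div_nat_pow.2 hω).comp_injective Subtype.coe_injective
  exact (Real.multipliable_one_add_of_summable ((hsum h0).neg.sub (hsum h1))).congr fun p => by
    simp only [localDensity]
    ring

theorem stmt_0 (ω0 ω1 : ℕ) (h0 : 2 ≤ ω0) (h1 : 2 ≤ ω1) :
    Multipliable (fun p : Nat.Primes =>
      (1 : ℝ) - 1 / ((p : ℕ) : ℝ) ^ ω0 - 1 / ((p : ℕ) : ℝ) ^ ω1) ∧
    Tendsto (fun n : ℕ =>
        (((Finset.Icc 2 n).filter
          (fun M => normInf M < ω0 ∧ normInf (M - 1) < ω1)).card : ℝ) / n)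
      atTop
      (nhds (∏' p : Nat.Primes,
        ((1 : ℝ) - 1 / ((p : ℕ) : ℝ) ^ ω0 - 1 / ((p : ℕ) : ℝ) ^ ω1))) := by
  have hmult := multipliable_localDensity h0 h1
  have he : Tendsto (fun z : ℕ => (5 : ℝ) / (z + 1)) atTop (𝓝 0) := by
    exact_mod_cast (tendsto_add_atTop_iff_nat 1).2 (tendsto_const_div_atTop_nhds_zero_nat (5 : ℝ))
  refine ⟨hmult, hmult.hasProd.tendsto_prod_primesLE.of_forall_eventually_dist_le he
    fun z => ?_⟩
  simpa only [Real.dist_eq] using eventually_abs_div_sub_prod_localDensity_le h0 h1 z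
end

section
/- The limit as n → ∞ of (1/n)·|{M : 2 ≤ M ≤ n, both M and M−1 are squarefree}| exists and equals the convergent infinite product ∏_{p prime} (1 − 2/p²). -/
/-!
Sieve by the squares of the primes `p ≤ z`. The set of `m` such that no such `p ^ 2` divides `m`
or `m + 1` is periodic modulo `∏ p ^ 2`, and by the Chinese remainder theorem it meets each period
in `∏ (p ^ 2 - 2)` residues, so it has density `∏_{p ≤ z} (1 - 2 / p ^ 2)`. It contains every `m`
with `m` and `m + 1` squarefree, and each further element `0 < m < n` has `p ^ 2 ∣ m` or
`p ^ 2 ∣ m + 1` for a prime `z < p ≤ n`; there are at most `∑_{p > z} 2 n / p ^ 2 ≤ 2 n / z` of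
those. So the sieved densities approximate the density of squarefree pairs up to `2 / z`,
uniformly in `n`, and letting `z → ∞` yields the Euler product.
-/

open scoped Classical
open Finset Function Filter Topology

lemma tendsto_div_natCast_of_abs_sub_le {u : ℕ → ℝ} {c C : ℝ} (h : ∀ n : ℕ, |u n - c * n| ≤ C) :
    Tendsto (fun n : ℕ => u n / n) atTop (𝓝 c) := by
  rw [← tendsto_sub_nhds_zero_iff]
  refine squeeze_zero_norm' ?_ (tendsto_const_div_atTop_nhds_zero_nat C)
  filter_upwards [eventually_gt_atTop 0] with n hn
  have hn' : (0 : ℝ) < n := by exact_mod_cast hn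
  rw [Real.norm_eq_abs, show u n / n - c = (u n - c * n) / n by field_simp, abs_div,
    abs_of_pos hn']
  exact div_le_div_of_nonneg_right (h n) hn'.le

lemma tendstoUniformly_of_dist_le {ι α β : Type*} [PseudoMetricSpace β] {F : ι → α → β}
    {f : α → β} {l : Filter ι} {δ : ι → ℝ} (hδ : Tendsto δ l (𝓝 0))
    (h : ∀ᶠ i in l, ∀ x, dist (f x) (F i x) ≤ δ i) : TendstoUniformly F f l :=
  Metric.tendstoUniformly_iff.2 fun _ hε =>
    (h.and (hδ.eventually (gt_mem_nhds hε))).mono fun _ hi x => (hi.1 x).trans_lt hi.2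

lemma Multipliable.tendsto_prod_primesBelow {M : Type*} [CommMonoid M] [TopologicalSpace M]
    {f : ℕ → M} (hf : Multipliable fun p : Nat.Primes => f p) :
    Tendsto (fun n : ℕ => ∏ p ∈ n.primesBelow, f p) atTop (𝓝 (∏' p : Nat.Primes, f p)) := by
  have h := (hasProd_subtype_iff_mulIndicator (s := {p | p.Prime}) (f := f)).1 hf.hasProd
  convert h.tendsto_prod_nat using 2 with n
  exact (prod_mulIndicator_eq_prod_filter (range n) (fun _ => f) (fun _ => {p | p.Prime}) id).symm

lemma Nat.Primes.multipliable_one_sub_div_sq (c : ℝ) :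
    Multipliable fun p : Nat.Primes => (1 : ℝ) - c / ((p : ℕ) : ℝ) ^ 2 := by
  have hsum : Summable fun p : Nat.Primes => ((p : ℕ) : ℝ) ^ (-2 : ℝ) :=
    Nat.Primes.summable_rpow.2 (by norm_num)
  simp_rw [sub_eq_add_neg]
  refine Real.multipliable_one_add_of_summable ((hsum.mul_left c).neg.congr fun p => ?_)
  rw [Real.rpow_neg (by positivity), Real.rpow_two, div_eq_mul_inv]

namespace Nat

section Periodic

variable {p : ℕ → Prop} [DecidablePred p] {a : ℕ}

lemma count_mul_add_of_periodic_s4 (hp : Periodic p a) (k r : ℕ) :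
    count p (k * a + r) = k * count p a + count p r := by
  have hshift : ∀ k r, count p (k * a + r) = count p (k * a) + count p r := fun k r => by
    rw [count_add]
    congr 2
    funext j
    simpa [add_comm] using hp.nat_mul k j
  have hmul : ∀ k, count p (k * a) = k * count p a := fun k => by
    induction k with
    | zero => simp
    | succ k ih => rw [succ_mul, hshift, ih, succ_mul]
  rw [hshift, hmul]

lemma tendsto_count_div_of_periodic (hp : Periodic p a) (ha : 0 < a) :
    Tendsto (fun n : ℕ => (count p n : ℝ) / n) atTop (𝓝 (count p a / a)) := by
  refine tendsto_div_natCast_of_abs_sub_le (C := count p a) fun n => ?_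
  obtain ⟨k, r, hr, rfl⟩ : ∃ k r, r < a ∧ n = k * a + r :=
    ⟨n / a, n % a, mod_lt n ha, (div_add_mod' n a).symm⟩
  have ha' : (0 : ℝ) < a := by exact_mod_cast ha
  have hcount : (count p r : ℝ) ≤ count p a := by exact_mod_cast count_monotone p hr.le
  have hfrac : count p a / a * r ≤ (count p a : ℝ) := by
    rw [div_mul_eq_mul_div, div_le_iff₀ ha']
    exact mul_le_mul_of_nonneg_left (by exact_mod_cast hr.le) (by positivity)
  have hsplit : (count p (k * a + r) : ℝ) - count p a / a * ↑(k * a + r)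
      = count p r - count p a / a * r := by
    rw [count_mul_add_of_periodic_s4 hp]
    push_cast
    field_simp
    ring
  rw [hsplit, abs_le]
  constructor <;> nlinarith [show (0 : ℝ) ≤ count p a / a * r by positivity]

end Periodic

lemma count_natCast_zmod (Q : ℕ) [NeZero Q] (Φ : ZMod Q → Prop) [DecidablePred Φ] :
    count (fun m : ℕ => Φ m) Q = #{x | Φ x} := by
  rw [count_eq_card_filter_range]
  refine card_nbij' (↑) ZMod.val (fun m hm => ?_) (fun x hx => ?_) (fun m hm => ?_) (fun x _ => ?_)
  · simpa using (mem_filter.1 hm).2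
  · simpa [ZMod.val_lt] using hx
  · exact ZMod.val_cast_of_lt (mem_range.1 (mem_filter.1 hm).1)
  · exact ZMod.natCast_zmod_val x

lemma count_forall_natCast_zmod {ι : Type*} [Fintype ι] [DecidableEq ι] (q : ι → ℕ)
    [∀ i, NeZero (q i)] (hq : Pairwise (Coprime on q)) (Φ : ∀ i, ZMod (q i) → Prop)
    [∀ i, DecidablePred (Φ i)] :
    count (fun m : ℕ => ∀ i, Φ i m) (∏ i, q i) = ∏ i, #{x | Φ i x} := by
  have : NeZero (∏ i, q i) := ⟨prod_ne_zero_iff.2 fun i _ => NeZero.ne _⟩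
  have hcast : ∀ (m : ℕ) i, (m : ZMod (q i)) = ZMod.prodEquivPi q hq m i := by simp
  simp_rw [hcast]
  rw [count_natCast_zmod (∏ i, q i) (fun x => ∀ i, Φ i (ZMod.prodEquivPi q hq x i)),
    ← Fintype.card_piFinset]
  exact card_equiv (ZMod.prodEquivPi q hq).toEquiv (by simp)

end Nat

lemma card_filter_dvd_or_dvd_add_one_le (d n : ℕ) :
    #{m ∈ Ioo 0 n | d ∣ m ∨ d ∣ m + 1} ≤ 2 * (n / d) := by
  rw [filter_or, two_mul, ← Nat.Ioc_filter_dvd_card_eq_div]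
  refine (card_union_le _ _).trans (add_le_add (card_le_card fun m hm => ?_) ?_)
  · simp only [mem_filter, mem_Ioo, mem_Ioc] at hm ⊢
    exact ⟨⟨hm.1.1, hm.1.2.le⟩, hm.2⟩
  · refine card_le_card_of_injOn (· + 1) (fun m hm => ?_) (fun a _ b _ h => Nat.succ_injective h)
    simp only [coe_filter, mem_Ioo, mem_Ioc, Set.mem_ofPred] at hm ⊢
    exact ⟨⟨m.succ_pos, hm.1.2⟩, hm.2⟩

lemma cast_sum_Ioc_div_sq_le {z : ℕ} (hz : z ≠ 0) (n : ℕ) :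
    ((∑ k ∈ Ioc z n, n / k ^ 2 : ℕ) : ℝ) ≤ n / z := by
  have hinv : ∑ k ∈ Ioc z n, ((k : ℝ) ^ 2)⁻¹ ≤ (z : ℝ)⁻¹ := by
    rcases le_or_gt z n with hzn | hnz
    · exact (sum_Ioc_inv_sq_le_sub hz hzn).trans (sub_le_self _ (by positivity))
    · rw [Ioc_eq_empty_of_le hnz.le, sum_empty]
      positivity
  calc ((∑ k ∈ Ioc z n, n / k ^ 2 : ℕ) : ℝ)
      ≤ ∑ k ∈ Ioc z n, n * ((k : ℝ) ^ 2)⁻¹ := by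
        push_cast
        refine sum_le_sum fun k _ => ?_
        rw [← div_eq_mul_inv]
        exact_mod_cast Nat.cast_div_le (α := ℝ) (m := n) (n := k ^ 2)
    _ ≤ n / z := by
        rw [← mul_sum, div_eq_mul_inv]
        gcongr

def SquarefreePair (m : ℕ) : Prop := Squarefree m ∧ Squarefree (m + 1)

instance : DecidablePred SquarefreePair := fun _ => by
  unfold SquarefreePair; infer_instance

lemma card_filter_Icc_squarefree_pair (n : ℕ) :
    #{M ∈ Icc 2 n | Squarefree M ∧ Squarefree (M - 1)} = Nat.count SquarefreePair n := by
  rw [Nat.count_eq_card_filter_range]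
  refine card_nbij' (· - 1) (· + 1) (fun M hM => ?_) (fun m hm => ?_) (fun M hM => ?_)
    (fun m _ => Nat.add_sub_cancel m 1)
  · simp only [coe_filter, mem_Icc, mem_range, Set.mem_ofPred] at hM ⊢
    refine ⟨by omega, hM.2.2, ?_⟩
    rw [Nat.sub_add_cancel (by omega)]
    exact hM.2.1
  · simp only [coe_filter, mem_Icc, mem_range, Set.mem_ofPred] at hm ⊢
    have hm0 : m ≠ 0 := by
      rintro rfl
      exact not_squarefree_zero hm.2.1
    exact ⟨⟨by omega, by omega⟩, hm.2.2, hm.2.1⟩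
  · simp only [coe_filter, mem_Icc, Set.mem_ofPred] at hM
    exact Nat.sub_add_cancel (by omega)

def PairSieved (s : Finset ℕ) (m : ℕ) : Prop := ∀ p ∈ s, ¬ p ^ 2 ∣ m ∧ ¬ p ^ 2 ∣ m + 1

instance (s : Finset ℕ) : DecidablePred (PairSieved s) := fun _ => by
  unfold PairSieved; infer_instance

namespace PairSieved

variable {s : Finset ℕ}

lemma periodic (s : Finset ℕ) : Periodic (PairSieved s) (∏ p ∈ s, p ^ 2) := fun m => by
  have hdvd : ∀ p ∈ s, p ^ 2 ∣ ∏ p ∈ s, p ^ 2 := fun p hp => dvd_prod_of_mem _ hp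
  refine propext (forall₂_congr fun p hp => ?_)
  rw [add_right_comm, Nat.dvd_add_left (hdvd p hp), Nat.dvd_add_left (hdvd p hp)]

lemma iff_natCast (m : ℕ) :
    PairSieved s m ↔ ∀ p : s, (m : ZMod ((p : ℕ) ^ 2)) ≠ 0 ∧ (m : ZMod ((p : ℕ) ^ 2)) ≠ -1 := by
  simp only [PairSieved, Subtype.forall, ne_eq, eq_neg_iff_add_eq_zero, ← Nat.cast_succ,
    ZMod.natCast_eq_zero_iff]

lemma count_eq_prod (hs : ∀ p ∈ s, p.Prime) :
    Nat.count (PairSieved s) (∏ p ∈ s, p ^ 2) = ∏ p ∈ s, (p ^ 2 - 2) := by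
  have : ∀ p : s, NeZero ((p : ℕ) ^ 2) := fun p => ⟨pow_ne_zero 2 (hs p p.2).ne_zero⟩
  have hcop : Pairwise (Nat.Coprime on fun p : s => (p : ℕ) ^ 2) := fun p q hpq =>
    Nat.Coprime.pow 2 2 <| (Nat.coprime_primes (hs p p.2) (hs q q.2)).2 (Subtype.coe_ne_coe.2 hpq)
  rw [← prod_coe_sort s, ← prod_coe_sort s]
  convert Nat.count_forall_natCast_zmod _ hcop (fun _ x => x ≠ 0 ∧ x ≠ -1) using 1
  · congr 1
    exact funext fun m => propext (iff_natCast m)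
  refine prod_congr rfl fun p _ => ?_
  have : Nontrivial (ZMod ((p : ℕ) ^ 2)) :=
    ZMod.nontrivial_iff.2 (Nat.one_lt_pow two_ne_zero (hs p p.2).one_lt).ne'
  have hfilter : ({x | x ≠ 0 ∧ x ≠ -1} : Finset (ZMod ((p : ℕ) ^ 2))) = {0, -1}ᶜ := by
    ext; simp
  rw [hfilter, card_compl, ZMod.card, card_pair (neg_ne_zero.2 one_ne_zero).symm]

lemma tendsto_count_div (hs : ∀ p ∈ s, p.Prime) :
    Tendsto (fun n : ℕ => (Nat.count (PairSieved s) n : ℝ) / n) atTop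
      (𝓝 (∏ p ∈ s, (1 - 2 / (p : ℝ) ^ 2))) := by
  convert Nat.tendsto_count_div_of_periodic (periodic s)
    (prod_pos fun p hp => pow_pos (hs p hp).pos 2) using 2
  rw [count_eq_prod hs, Nat.cast_prod, Nat.cast_prod, ← prod_div_distrib]
  refine prod_congr rfl fun p hp => ?_
  have hp2 : 2 ≤ p ^ 2 := (hs p hp).two_le.trans (Nat.le_self_pow two_ne_zero p)
  have hp0 : (p : ℝ) ≠ 0 := by exact_mod_cast (hs p hp).ne_zero
  rw [Nat.cast_sub hp2]
  push_cast
  field_simp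

lemma of_squarefreePair (hs : ∀ p ∈ s, p.Prime) {m : ℕ} (hm : SquarefreePair m) :
    PairSieved s m := fun p hp => by
  simp only [sq]
  exact ⟨Nat.squarefree_iff_prime_squarefree.1 hm.1 p (hs p hp),
    Nat.squarefree_iff_prime_squarefree.1 hm.2 p (hs p hp)⟩

lemma exists_lt_prime_sq_dvd {z m : ℕ} (hs : ∀ p ≤ z, p.Prime → p ∈ s) (hm : PairSieved s m)
    (hm' : ¬ SquarefreePair m) : ∃ p, z < p ∧ (p ^ 2 ∣ m ∨ p ^ 2 ∣ m + 1) := by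
  obtain ⟨p, hp, hdvd⟩ : ∃ p, p.Prime ∧ (p ^ 2 ∣ m ∨ p ^ 2 ∣ m + 1) := by
    simp only [SquarefreePair, Nat.squarefree_iff_prime_squarefree, not_and_or, not_forall,
      not_not] at hm'
    rcases hm' with ⟨p, hp, h⟩ | ⟨p, hp, h⟩
    exacts [⟨p, hp, .inl (sq p ▸ h)⟩, ⟨p, hp, .inr (sq p ▸ h)⟩]
  refine ⟨p, ?_, hdvd⟩
  by_contra! hpz
  have := hm p (hs p hpz hp)
  tauto

lemma count_le_count_squarefreePair_add {z : ℕ} (hs : ∀ p ≤ z, p.Prime → p ∈ s) (hz : 2 ≤ z)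
    (n : ℕ) :
    Nat.count (PairSieved s) n ≤ Nat.count SquarefreePair n + 2 * ∑ k ∈ Ioc z n, n / k ^ 2 := by
  simp only [Nat.count_eq_card_filter_range, mul_sum]
  have hsub : {m ∈ range n | PairSieved s m} ⊆ {m ∈ range n | SquarefreePair m}
      ∪ (Ioc z n).biUnion fun k => {m ∈ Ioo 0 n | k ^ 2 ∣ m ∨ k ^ 2 ∣ m + 1} := by
    intro m hm
    obtain ⟨hmn, hsieve⟩ := mem_filter.1 hm
    by_cases hR : SquarefreePair m
    · exact mem_union_left _ (mem_filter.2 ⟨hmn, hR⟩)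
    -- `0` lies in no `Ioo 0 n`, but the prime `2 ≤ z` sieves it out.
    have hm0 : 0 < m := Nat.pos_of_ne_zero <| by
      rintro rfl
      exact (hsieve 2 (hs 2 hz Nat.prime_two)).1 (dvd_zero _)
    obtain ⟨p, hzp, hdvd⟩ := exists_lt_prime_sq_dvd hs hsieve hR
    have hpn : p ≤ n := by
      have hpsq : p ≤ p ^ 2 := Nat.le_self_pow two_ne_zero p
      rcases hdvd with h | h
      · linarith [Nat.le_of_dvd hm0 h, mem_range.1 hmn]
      · linarith [Nat.le_of_dvd m.succ_pos h, mem_range.1 hmn]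
    simp only [mem_union, mem_biUnion, mem_filter, mem_Ioc, mem_Ioo]
    exact .inr ⟨p, ⟨hzp, hpn⟩, ⟨hm0, mem_range.1 hmn⟩, hdvd⟩
  calc _ ≤ _ := card_le_card hsub
    _ ≤ _ := (card_union_le _ _).trans (add_le_add le_rfl card_biUnion_le)
    _ ≤ _ := add_le_add le_rfl (sum_le_sum fun k _ => card_filter_dvd_or_dvd_add_one_le _ _)

lemma dist_count_div_le {z : ℕ} (hs : ∀ p ∈ s, p.Prime) (hzs : ∀ p ≤ z, p.Prime → p ∈ s)
    (hz : 2 ≤ z) (n : ℕ) :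
    dist ((Nat.count SquarefreePair n : ℝ) / n) ((Nat.count (PairSieved s) n : ℝ) / n)
      ≤ 2 / z := by
  have hlow : (Nat.count SquarefreePair n : ℝ) ≤ Nat.count (PairSieved s) n := by
    exact_mod_cast Nat.count_mono_left fun m _ => of_squarefreePair hs
  have hhigh : (Nat.count (PairSieved s) n : ℝ) ≤ Nat.count SquarefreePair n + 2 * (n / z) := by
    refine le_trans ?_ (add_le_add le_rfl
      (mul_le_mul_of_nonneg_left (cast_sum_Ioc_div_sq_le (by omega) n) zero_le_two))
    exact_mod_cast count_le_count_squarefreePair_add hzs hz n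
  rcases n.eq_zero_or_pos with rfl | hn
  · simp only [CharP.cast_eq_zero, div_zero, dist_self]
    positivity
  have hn' : (0 : ℝ) < n := by exact_mod_cast hn
  rw [Real.dist_eq, abs_sub_comm, ← sub_div, abs_div, abs_of_nonneg (sub_nonneg.2 hlow),
    abs_of_pos hn', div_le_iff₀ hn', div_mul_eq_mul_div]
  linarith [mul_div_assoc 2 (n : ℝ) z]

end PairSieved

theorem stmt_4 :
    Multipliable (fun p : Nat.Primes => (1 : ℝ) - 2 / ((p : ℕ) : ℝ) ^ 2) ∧
    Tendsto (fun n : ℕ =>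
        (((Finset.Icc 2 n).filter
          (fun M => Squarefree M ∧ Squarefree (M - 1))).card : ℝ) / n)
      atTop
      (nhds (∏' p : Nat.Primes, ((1 : ℝ) - 2 / ((p : ℕ) : ℝ) ^ 2))) := by
  have hmul := Nat.Primes.multipliable_one_sub_div_sq 2
  refine ⟨hmul, ?_⟩
  simp only [card_filter_Icc_squarefree_pair]
  have hprimes (z : ℕ) : ∀ p ∈ z.primesBelow, p.Prime := fun _ hp => (Nat.mem_primesBelow.1 hp).2
  have hunif : TendstoUniformly (fun z n => (Nat.count (PairSieved (z + 1).primesBelow) n : ℝ) / n)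
      (fun n => (Nat.count SquarefreePair n : ℝ) / n) atTop :=
    tendstoUniformly_of_dist_le (tendsto_const_div_atTop_nhds_zero_nat 2) <|
      (eventually_ge_atTop 2).mono fun z hz => PairSieved.dist_count_div_le (hprimes _)
        (fun p hpz hp => Nat.mem_primesBelow.2 ⟨Nat.lt_succ_of_le hpz, hp⟩) hz
  exact hunif.tendsto_of_eventually_tendsto
    (.of_forall fun z => PairSieved.tendsto_count_div (hprimes _))
    (hmul.tendsto_prod_primesBelow.comp (tendsto_add_atTop_nat 1))
end

section
/- As N → ∞, (1/N)·(L_1(N) − 2N·∑ p^{−α}) → 0, where the sum runs over all prime powers p^α ≤ N with p prime and α ≥ 1. -/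
open scoped Classical
open Filter

/-- `Ω(N)`: the number of prime factors of `N` counted with multiplicity. -/
def bigOmega (N : ℕ) : ℕ := N.primeFactorsList.length

/-- `L_1(N) = Ω(N) + 2 ∑_{M=2}^{N-1} Ω(M)`, with `L_1(1) = 0`. -/
def L1 (N : ℕ) : ℕ := bigOmega N + 2 * ∑ M ∈ Finset.Icc 2 (N - 1), bigOmega M

/-!
Counting the prime-power divisors of each `M ≤ N` gives `Ω(M) = #{q ∣ M : q a prime power}`, and
swapping the double sum yields `∑_{M ≤ N} Ω(M) = ∑_{q ≤ N} ⌊N/q⌋`, which is `(L₁(N) + Ω(N)) / 2`.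
Replacing `⌊N/q⌋` by `N/q` costs at most one per prime power, and `Ω(N)` is at most the number of
prime powers up to `N`, so `|L₁(N) - 2N ∑ 1/q|` is at most three times that number. That count
is `o(N)`: the primes are `o(N)` by Chebyshev's bound, and the proper powers `p^k ≤ N` (`k ≥ 2`)
have `p ≤ √N` and `k ≤ log₂ N`.
-/

open Finset Asymptotics ArithmeticFunction
open scoped ArithmeticFunction.Omega Nat.Prime

theorem bigOmega_eq_cardFactors : bigOmega = ⇑Ω := funext fun n => (cardFactors_apply (n := n)).symm

theorem card_divisors_filter_isPrimePow (n : ℕ) : #{d ∈ n.divisors | IsPrimePow d} = Ω n := by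
  induction n using Nat.recOnPosPrimePosCoprime with
  | prime_pow p k hp hk =>
    have : {i ∈ range (k + 1) | IsPrimePow (p ^ i)} = Ioc 0 k := by
      ext i
      rcases i.eq_zero_or_pos with rfl | hi
      · simp [not_isPrimePow_one]
      · simp [hi, isPrimePow_pow_iff hi.ne', hp.isPrimePow]
    rw [Nat.divisors_prime_pow hp, filter_map, card_map, cardFactors_apply_prime_pow hp]
    exact (congrArg card this).trans (Nat.card_Ioc 0 k)
  | zero => simp
  | one => simp [not_isPrimePow_one]
  | coprime a b ha hb hab iha ihb =>
    rw [Nat.mul_divisors_filter_prime_pow hab, filter_union,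
      card_union_of_disjoint (Nat.disjoint_divisors_filter_isPrimePow hab), iha, ihb,
      cardFactors_mul (by omega) (by omega)]

theorem sum_card_divisors_filter (P : ℕ → Prop) [DecidablePred P] (N : ℕ) :
    ∑ M ∈ Ioc 0 N, #{d ∈ M.divisors | P d} = ∑ d ∈ Ioc 0 N with P d, N / d := by
  have h := sum_card_bipartiteAbove_eq_sum_card_bipartiteBelow (s := Ioc 0 N)
    (t := {d ∈ Ioc 0 N | P d}) (r := fun M d => d ∣ M)
  refine (sum_congr rfl fun M hM => ?_).trans (h.trans (sum_congr rfl fun d _ => ?_))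
  · rw [mem_Ioc] at hM
    congr 1
    ext d
    simp only [bipartiteAbove, mem_filter, mem_Ioc, Nat.mem_divisors]
    constructor
    · rintro ⟨⟨hdM, -⟩, hP⟩
      exact ⟨⟨⟨Nat.pos_of_dvd_of_pos hdM hM.1, (Nat.le_of_dvd hM.1 hdM).trans hM.2⟩, hP⟩, hdM⟩
    · rintro ⟨⟨_, hP⟩, hdM⟩
      exact ⟨⟨hdM, by omega⟩, hP⟩
  · exact Nat.Ioc_filter_dvd_card_eq_div N d

theorem sum_cardFactors_Ioc (N : ℕ) :
    ∑ M ∈ Ioc 0 N, Ω M = ∑ q ∈ Icc 2 N with IsPrimePow q, N / q := by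
  have : {q ∈ Ioc 0 N | IsPrimePow q} = {q ∈ Icc 2 N | IsPrimePow q} := by
    ext q
    simp only [mem_filter, mem_Ioc, mem_Icc]
    constructor
    · rintro ⟨⟨_, hq⟩, hpp⟩
      exact ⟨⟨hpp.two_le, hq⟩, hpp⟩
    · rintro ⟨⟨h2, hq⟩, hpp⟩
      exact ⟨⟨by omega, hq⟩, hpp⟩
  simp_rw [← card_divisors_filter_isPrimePow, sum_card_divisors_filter, this]

theorem L1_add_bigOmega {N : ℕ} (hN : N ≠ 0) : L1 N + bigOmega N = 2 * ∑ M ∈ Ioc 0 N, Ω M := by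
  obtain ⟨n, rfl⟩ := Nat.exists_eq_add_one_of_ne_zero hN
  have hsub : ∑ M ∈ Icc 2 n, Ω M = ∑ M ∈ Ioc 0 n, Ω M :=
    sum_subset (fun M hM => by simp only [mem_Icc, mem_Ioc] at *; omega) fun M hM hM' => by
      simp only [mem_Icc, mem_Ioc] at hM hM'
      simp [show M = 1 by omega]
  rw [L1, bigOmega_eq_cardFactors, Nat.add_sub_cancel, hsub, sum_Ioc_succ_top (Nat.zero_le n)]
  ring

theorem cardFactors_le_card_filter_isPrimePow {N : ℕ} (hN : N ≠ 0) :
    Ω N ≤ #{q ∈ Icc 2 N | IsPrimePow q} := by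
  rw [← card_divisors_filter_isPrimePow]
  refine card_le_card fun q hq => ?_
  simp only [mem_filter, Nat.mem_divisors, mem_Icc] at hq ⊢
  exact ⟨⟨hq.2.two_le, Nat.le_of_dvd (Nat.pos_of_ne_zero hN) hq.1.1⟩, hq.2⟩

theorem card_filter_isPrimePow_le (N : ℕ) :
    #{q ∈ Icc 2 N | IsPrimePow q} ≤ π N + N.sqrt * Nat.log 2 N := by
  set T := {q ∈ Icc 2 N | IsPrimePow q}
  have hprime : #{q ∈ T | q.Prime} ≤ π N := by
    rw [← Nat.primesLE_card_eq_primeCounting, Nat.primesLE_eq_filter_Icc_two]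
    refine card_le_card fun q hq => ?_
    simp only [T, mem_filter] at hq ⊢
    exact ⟨hq.1.1, hq.2⟩
  have hpow : {q ∈ T | ¬q.Prime} ⊆
      (Icc 1 N.sqrt ×ˢ Icc 1 (Nat.log 2 N)).image fun pk => pk.1 ^ pk.2 := by
    intro q hq
    simp only [T, mem_filter, mem_Icc] at hq
    obtain ⟨⟨⟨-, hqN⟩, hpp⟩, hnp⟩ := hq
    obtain ⟨p, k, (hp : p.Prime), hk, rfl⟩ := (isPrimePow_nat_iff _).1 hpp
    have hk2 : 2 ≤ k := by
      by_contra
      obtain rfl : k = 1 := by omega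
      exact hnp (by simpa using hp)
    simp only [mem_image, mem_product, mem_Icc, Prod.exists]
    refine ⟨p, k, ⟨⟨hp.pos, Nat.le_sqrt.2 ?_⟩, hk, Nat.le_log_of_pow_le one_lt_two ?_⟩, rfl⟩
    · calc p * p = p ^ 2 := (sq p).symm
        _ ≤ p ^ k := Nat.pow_le_pow_right hp.pos hk2
        _ ≤ N := hqN
    · exact (Nat.pow_le_pow_left hp.two_le k).trans hqN
  calc #T = #{q ∈ T | q.Prime} + #{q ∈ T | ¬q.Prime} :=
        (card_filter_add_card_filter_not _).symm
    _ ≤ π N + N.sqrt * Nat.log 2 N := by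
      gcongr
      exact (card_le_card hpow).trans (card_image_le.trans (by simp))

theorem primeCounting_isLittleO : (fun N : ℕ => (π N : ℝ)) =o[atTop] (fun N => (N : ℝ)) := by
  have hdiv : (fun x : ℝ => x / Real.log x) =o[atTop] fun x => x := by
    have h := ((isLittleO_one_iff ℝ).2
      (tendsto_inv_atTop_zero.comp Real.tendsto_log_atTop)).mul_isBigO (isBigO_refl id atTop)
    simpa [div_eq_inv_mul] using h
  have hbound : (fun x : ℝ => (π ⌊x⌋₊ : ℝ)) =O[atTop] fun x => x / Real.log x := by
    refine IsBigO.of_bound (Real.log 4 + 1) ?_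
    filter_upwards [Chebyshev.eventually_primeCounting_le one_pos, eventually_ge_atTop 1]
      with x hx hx1
    rw [Real.norm_natCast, Real.norm_of_nonneg (div_nonneg (by linarith) (Real.log_nonneg hx1)),
      ← mul_div_assoc]
    exact hx
  simpa [Function.comp_def] using
    (hbound.trans_isLittleO hdiv).comp_tendsto tendsto_natCast_atTop_atTop

theorem sqrt_mul_log_isLittleO :
    (fun N : ℕ => ((N.sqrt * Nat.log 2 N : ℕ) : ℝ)) =o[atTop] (fun N => (N : ℝ)) := by
  have hreal : (fun x : ℝ => √x * Real.log x) =o[atTop] id := by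
    refine ((isBigO_refl (fun x : ℝ => √x) atTop).mul_isLittleO
      (isLittleO_log_rpow_atTop one_half_pos)).congr' EventuallyEq.rfl ?_
    filter_upwards [eventually_ge_atTop 0] with x hx
    rw [← Real.sqrt_eq_rpow, Real.mul_self_sqrt hx, id]
  have hbound : (fun N : ℕ => ((N.sqrt * Nat.log 2 N : ℕ) : ℝ)) =O[atTop]
      fun N : ℕ => √N * Real.log N := by
    refine IsBigO.of_bound (Real.log 2)⁻¹ (Filter.Eventually.of_forall fun N => ?_)
    have hsqrt : (N.sqrt : ℝ) ≤ √N := Real.nat_sqrt_le_real_sqrt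
    have hlog : (Nat.log 2 N : ℝ) ≤ Real.log N / Real.log 2 := Real.natLog_le_logb N 2
    rw [Real.norm_natCast, Real.norm_of_nonneg (by positivity), Nat.cast_mul, inv_mul_eq_div,
      mul_div_assoc]
    gcongr
  exact hbound.trans_isLittleO (hreal.comp_tendsto tendsto_natCast_atTop_atTop)

theorem card_filter_isPrimePow_isLittleO :
    (fun N : ℕ => (#{q ∈ Icc 2 N | IsPrimePow q} : ℝ)) =o[atTop] (fun N => (N : ℝ)) := by
  refine IsBigO.trans_isLittleO (IsBigO.of_bound 1 (Filter.Eventually.of_forall fun N => ?_))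
    (primeCounting_isLittleO.add sqrt_mul_log_isLittleO)
  rw [Real.norm_natCast, one_mul, Real.norm_of_nonneg (by positivity)]
  exact_mod_cast card_filter_isPrimePow_le N

theorem abs_L1_sub_le {N : ℕ} (hN : N ≠ 0) :
    |(L1 N : ℝ) - 2 * N * ∑ q ∈ Icc 2 N with IsPrimePow q, (1 / (q : ℝ))|
      ≤ 3 * #{q ∈ Icc 2 N | IsPrimePow q} := by
  set T := {q ∈ Icc 2 N | IsPrimePow q}
  have hL1 : (L1 N : ℝ) + Ω N = 2 * ∑ q ∈ T, ((N / q : ℕ) : ℝ) := by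
    have h := L1_add_bigOmega hN
    rw [sum_cardFactors_Ioc, bigOmega_eq_cardFactors] at h
    exact_mod_cast h
  have hfloor : ∀ q ∈ T,
      ((N / q : ℕ) : ℝ) ≤ N * (1 / q) ∧ (N : ℝ) * (1 / q) ≤ (N / q : ℕ) + 1 := by
    intro q _
    rw [mul_one_div, ← Nat.floor_div_eq_div (K := ℝ)]
    exact ⟨Nat.floor_le (by positivity), (Nat.lt_floor_add_one _).le⟩
  have hlow := sum_le_sum fun q hq => (hfloor q hq).1
  have hhigh := sum_le_sum fun q hq => (hfloor q hq).2
  rw [sum_add_distrib, sum_const, nsmul_one] at hhigh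
  have hΩ : (Ω N : ℝ) ≤ #T := by exact_mod_cast cardFactors_le_card_filter_isPrimePow hN
  rw [mul_assoc, mul_sum, abs_le]
  constructor <;> linarith [(Ω N).cast_nonneg (α := ℝ)]

theorem stmt_12 :
    Tendsto (fun N : ℕ =>
        ((L1 N : ℝ) -
          2 * N * ∑ q ∈ (Finset.Icc 2 N).filter IsPrimePow, (1 / (q : ℝ))) / N)
      atTop (nhds 0) := by
  refine IsLittleO.tendsto_div_nhds_zero (IsBigO.trans_isLittleO ?_
    card_filter_isPrimePow_isLittleO)
  refine IsBigO.of_bound 3 ?_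
  filter_upwards [eventually_ne_atTop 0] with N hN
  simpa only [Real.norm_eq_abs, Nat.abs_cast] using abs_L1_sub_le hN
end

section
/- For every integer k ≥ 2, the limit as n → ∞ of (1/n)·|{M : 1 ≤ M ≤ n, ‖M‖_∞ = k}| exists and equals 1/ζ(k+1) − 1/ζ(k), where ζ is the Riemann zeta function. -/
open scoped Classical
open Filter

/-!
For `M ≠ 0`, `‖M‖_∞ < j` says that `1` is the only `d` with `d ^ j ∣ M`. Those `d` are exactly the
divisors of `Nat.floorRoot j M`, so Möbius inversion gives `[‖M‖_∞ < j] = ∑_{d ^ j ∣ M} μ(d)`, and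
summing over `M ≤ n`, `#{M ≤ n | ‖M‖_∞ < j} = ∑_{d ≤ n} μ(d) ⌊n / d ^ j⌋`. Divided by `n`, the
`d`-th term tends to `μ(d) / d ^ j` and is bounded by `d ^ (-j)`, which is summable for `j ≥ 2`;
dominated convergence gives the density `∑ μ(d) / d ^ j = 1 / ζ(j)`. The numbers with `‖M‖_∞ = k`
are those with `‖M‖_∞ < k + 1` minus those with `‖M‖_∞ < k`.
-/

open Finset ArithmeticFunction ArithmeticFunction.Moebius

lemma normInf_lt_iff_s14 {j M : ℕ} (hj : j ≠ 0) : normInf M < j ↔ ∀ p, M.factorization p < j := by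
  rw [normInf, Finset.sup_lt_iff (by rw [Nat.bot_eq_zero]; omega)]
  refine ⟨fun h p => ?_, fun h p _ => h p⟩
  by_cases hp : p ∈ M.factorization.support
  · exact h p hp
  · rw [Finsupp.notMem_support_iff.mp hp]
    omega

lemma floorRoot_eq_one_iff_normInf_lt {j M : ℕ} (hj : j ≠ 0) (hM : M ≠ 0) :
    Nat.floorRoot j M = 1 ↔ normInf M < j := by
  have h0 := Nat.floorRoot_ne_zero.2 ⟨hj, hM⟩
  rw [← or_iff_right (b := Nat.floorRoot j M = 1) h0, ← Nat.factorization_eq_zero_iff',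
    Nat.factorization_floorRoot, normInf_lt_iff_s14 hj, Finsupp.ext_iff]
  simp [Nat.div_eq_zero_iff, hj]

lemma sum_moebius_divisors_floorRoot {j M : ℕ} (hj : j ≠ 0) (hM : M ≠ 0) :
    ∑ d ∈ (Nat.floorRoot j M).divisors, (μ d : ℤ) = if normInf M < j then 1 else 0 := by
  rw [← coe_mul_zeta_apply, moebius_mul_coe_zeta, one_apply]
  exact if_congr (floorRoot_eq_one_iff_normInf_lt hj hM) rfl rfl

lemma divisors_floorRoot_eq_filter {j M n : ℕ} (hj : j ≠ 0) (hM : M ≠ 0) (hMn : M ≤ n) :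
    (Nat.floorRoot j M).divisors = {d ∈ Icc 1 n | d ^ j ∣ M} := by
  ext d
  simp only [Nat.mem_divisors, mem_filter, mem_Icc, ← Nat.pow_dvd_iff_dvd_floorRoot,
    ne_eq, Nat.floorRoot_eq_zero, hj, hM, or_self, not_false_eq_true, and_true]
  refine ⟨fun hd => ⟨⟨?_, ?_⟩, hd⟩, And.right⟩
  · rcases Nat.eq_zero_or_pos d with rfl | hd0
    · simp [zero_pow hj, hM] at hd
    · exact hd0
  · calc d ≤ d ^ j := Nat.le_self_pow hj d
      _ ≤ M := Nat.le_of_dvd (by omega) hd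
      _ ≤ n := hMn

lemma card_normInf_lt_eq_sum {j : ℕ} (hj : j ≠ 0) (n : ℕ) :
    (#{M ∈ Icc 1 n | normInf M < j} : ℤ) = ∑ d ∈ Icc 1 n, μ d * (n / d ^ j : ℕ) := by
  calc (#{M ∈ Icc 1 n | normInf M < j} : ℤ)
      = ∑ M ∈ Icc 1 n, ∑ d ∈ {d ∈ Icc 1 n | d ^ j ∣ M}, (μ d : ℤ) := by
        rw [card_filter, Nat.cast_sum]
        refine sum_congr rfl fun M hM => ?_
        rw [mem_Icc] at hM
        rw [← divisors_floorRoot_eq_filter hj (by omega) hM.2,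
          sum_moebius_divisors_floorRoot hj (by omega)]
        push_cast
        rfl
    _ = ∑ d ∈ Icc 1 n, ∑ M ∈ {M ∈ Icc 1 n | d ^ j ∣ M}, (μ d : ℤ) :=
        sum_comm' fun M d => by simp only [mem_filter]; tauto
    _ = ∑ d ∈ Icc 1 n, μ d * (n / d ^ j : ℕ) := by
        refine sum_congr rfl fun d _ => ?_
        rw [sum_const, show Icc 1 n = Ioc 0 n from Icc_add_one_left_eq_Ioc 0 n,
          Nat.Ioc_filter_dvd_card_eq_div, nsmul_eq_mul, mul_comm]

lemma natCast_div_div_le (n m : ℕ) : ((n / m : ℕ) : ℝ) / n ≤ 1 / m := by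
  rcases Nat.eq_zero_or_pos n with rfl | hn
  · simp
  calc ((n / m : ℕ) : ℝ) / n ≤ (n / m : ℝ) / n := by gcongr; exact Nat.cast_div_le
    _ = 1 / m := by rw [div_div_cancel_left' (by positivity), one_div]

lemma tendsto_natCast_div_div_atTop (m : ℕ) :
    Tendsto (fun n : ℕ => ((n / m : ℕ) : ℝ) / n) atTop (nhds (1 / m)) := by
  rcases Nat.eq_zero_or_pos m with rfl | hm
  · simp
  have hm' : (0 : ℝ) < m := by exact_mod_cast hm
  have h := ((tendsto_nat_floor_div_atTop (R := ℝ)).comp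
    (tendsto_natCast_atTop_atTop.atTop_div_const hm')).mul_const (1 / (m : ℝ))
  rw [one_mul] at h
  refine h.congr' ?_
  filter_upwards [eventually_ne_atTop 0] with n hn
  simp only [Function.comp_apply, Nat.floor_div_eq_div]
  field_simp

lemma card_normInf_lt_div_eq_tsum {j : ℕ} (hj : j ≠ 0) (n : ℕ) :
    (#{M ∈ Icc 1 n | normInf M < j} : ℝ) / n = ∑' d, (μ d : ℝ) * (((n / d ^ j : ℕ) : ℝ) / n) := by
  have hsupp : ∀ d ∉ Icc 1 n, (μ d : ℝ) * (((n / d ^ j : ℕ) : ℝ) / n) = 0 := fun d hd => by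
    rcases Nat.eq_zero_or_pos d with rfl | hd0
    · simp
    have hnd : n < d ^ j :=
      (show n < d by simp at hd; omega).trans_le (Nat.le_self_pow hj d)
    simp [Nat.div_eq_of_lt hnd]
  have hcount := congrArg (Int.cast : ℤ → ℝ) (card_normInf_lt_eq_sum hj n)
  simp only [Int.cast_natCast, Int.cast_sum, Int.cast_mul] at hcount
  rw [hcount, sum_div, tsum_eq_sum hsupp]
  simp only [mul_div_assoc]

lemma tendsto_card_normInf_lt_div {j : ℕ} (hj : 2 ≤ j) :
    Tendsto (fun n : ℕ => (#{M ∈ Icc 1 n | normInf M < j} : ℝ) / n) atTop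
      (nhds (∑' d : ℕ, (μ d : ℝ) / d ^ j)) := by
  simp_rw [card_normInf_lt_div_eq_tsum (by omega : j ≠ 0)]
  refine tendsto_tsum_of_dominated_convergence (bound := fun d : ℕ => 1 / (d : ℝ) ^ j)
    (Real.summable_one_div_nat_pow.mpr (by omega)) (fun d => ?_) ?_
  · simpa [div_eq_mul_one_div (μ d : ℝ)] using
      (tendsto_natCast_div_div_atTop (d ^ j)).const_mul (μ d : ℝ)
  · refine Eventually.of_forall fun n d => ?_
    have hμ : ‖(μ d : ℝ)‖ ≤ 1 := by
      rw [Real.norm_eq_abs]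
      exact_mod_cast abs_moebius_le_one
    rw [norm_mul, Real.norm_of_nonneg (by positivity : (0 : ℝ) ≤ ((n / d ^ j : ℕ) : ℝ) / n)]
    calc ‖(μ d : ℝ)‖ * (((n / d ^ j : ℕ) : ℝ) / n) ≤ 1 * (1 / (d ^ j : ℕ)) :=
          mul_le_mul hμ (natCast_div_div_le n (d ^ j)) (by positivity) zero_le_one
      _ = 1 / (d : ℝ) ^ j := by push_cast; ring

lemma ofReal_tsum_moebius_div_pow_eq_inv_riemannZeta {j : ℕ} (hj : 2 ≤ j) :
    ((∑' d : ℕ, (μ d : ℝ) / d ^ j : ℝ) : ℂ) = (riemannZeta j)⁻¹ := by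
  have hre : 1 < (j : ℂ).re := by rw [Complex.natCast_re]; exact_mod_cast hj
  have hL : riemannZeta j * LSeries (fun n => (μ n : ℂ)) j = 1 := by
    rw [← LSeries_one_eq_riemannZeta hre]
    exact LSeries_one_mul_Lseries_moebius hre
  rw [inv_eq_of_mul_eq_one_right hL, LSeries, Complex.ofReal_tsum]
  refine tsum_congr fun d => ?_
  rcases eq_or_ne d 0 with rfl | hd
  · simp
  · rw [LSeries.term_of_ne_zero hd, Complex.cpow_natCast]
    push_cast
    rfl

lemma card_filter_eq_add_card_filter_lt {α : Type*} (s : Finset α) (f : α → ℕ) (k : ℕ) :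
    #{x ∈ s | f x = k} + #{x ∈ s | f x < k} = #{x ∈ s | f x < k + 1} := by
  rw [← card_union_of_disjoint (disjoint_filter.2 fun _ _ h => h.not_lt), ← filter_or]
  exact congrArg card (filter_congr fun _ _ => by omega)

theorem stmt_14 (k : ℕ) (hk : 2 ≤ k) :
    ∃ L : ℝ,
      Tendsto (fun n : ℕ =>
          (((Finset.Icc 1 n).filter (fun M => normInf M = k)).card : ℝ) / n)
        atTop (nhds L) ∧
      (L : ℂ) = (riemannZeta ((k : ℂ) + 1))⁻¹ - (riemannZeta (k : ℂ))⁻¹ := by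
  refine ⟨(∑' d : ℕ, (μ d : ℝ) / d ^ (k + 1)) - ∑' d : ℕ, (μ d : ℝ) / d ^ k, ?_, ?_⟩
  · refine ((tendsto_card_normInf_lt_div (by omega)).sub (tendsto_card_normInf_lt_div hk)).congr
      fun n => ?_
    rw [← sub_div, ← card_filter_eq_add_card_filter_lt]
    push_cast
    ring
  · rw [Complex.ofReal_sub, ofReal_tsum_moebius_div_pow_eq_inv_riemannZeta (by omega),
      ofReal_tsum_moebius_div_pow_eq_inv_riemannZeta hk]
    push_cast
    rfl
end

section
/- The sequence 𝒟¹_k takes arbitrarily large values: for every B there exists k with 𝒟¹_k > B. -/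
open scoped Classical
open Filter

/-- `L_∞(N) = ∑_{M=2}^N max(‖M‖_∞, ‖M-1‖_∞)`, with `L_∞(1) = 0`. -/
noncomputable def Linf (N : ℕ) : ℕ :=
  ∑ M ∈ Finset.Icc 2 N, max (normInf M) (normInf (M - 1))

/-- The `k`-th prime number, with `p_1 = 2`. -/
noncomputable def primeSeq (k : ℕ) : ℕ := Nat.nth Nat.Prime (k - 1)

/-- `𝒟¹_k = L_∞(p_{k+1}) - L_∞(p_k)`. -/
noncomputable def D1 (k : ℕ) : ℕ := Linf (primeSeq (k + 1)) - Linf (primeSeq k)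

lemma normInf_two_pow (n : ℕ) (hn : 1 ≤ n) : normInf (2 ^ n) = n := by
  unfold normInf
  rw [Nat.Prime.factorization_pow Nat.prime_two]
  rw [Finsupp.support_single_ne_zero _ (by omega)]
  simp

lemma Linf_add (p q : ℕ) (hp : 1 ≤ p) (hpq : p ≤ q) :
    Linf q = Linf p + ∑ M ∈ Finset.Ioc p q, max (normInf M) (normInf (M - 1)) := by
  unfold Linf
  have h2 : ∀ N : ℕ, Finset.Icc 2 N = Finset.Ioc 1 N := by
    intro N; ext x; simp [Nat.lt_iff_add_one_le]
  rw [h2, h2, Finset.sum_Ioc_consecutive _ hp hpq]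

theorem stmt_15 : ∀ B : ℕ, ∃ k : ℕ, 1 ≤ k ∧ B < D1 k := by
  intro B
  set n := B + 2 with hn
  set c := Nat.count Nat.Prime (2 ^ n) with hc
  have hinf := Nat.infinite_setOf_prime
  have hc2 : 2 ≤ c := by
    have : Nat.count Nat.Prime 4 ≤ c := Nat.count_monotone _ (by
      calc (4:ℕ) = 2^2 := rfl
      _ ≤ 2^n := Nat.pow_le_pow_right (by norm_num) (by omega))
    have h4 : Nat.count Nat.Prime 4 = 2 := by decide
    omega
  refine ⟨c, by omega, ?_⟩
  have hlt : Nat.nth Nat.Prime (c - 1) < 2 ^ n :=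
    Nat.nth_lt_of_lt_count (by omega)
  have hle : 2 ^ n ≤ Nat.nth Nat.Prime c := Nat.le_nth_count hinf _
  have hp1 : 1 ≤ Nat.nth Nat.Prime (c - 1) := by
    have := (Nat.prime_nth_prime (c-1)).two_le; omega
  have hkey : primeSeq c ≤ primeSeq (c + 1) := by
    unfold primeSeq
    simp only [Nat.add_sub_cancel]
    exact le_of_lt (by
      apply (Nat.nth_lt_nth hinf).2; omega)
  have heq : Linf (primeSeq (c+1)) = Linf (primeSeq c) +
      ∑ M ∈ Finset.Ioc (primeSeq c) (primeSeq (c+1)), max (normInf M) (normInf (M - 1)) := by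
    apply Linf_add _ _ _ hkey
    unfold primeSeq; omega
  have hmem : (2:ℕ) ^ n ∈ Finset.Ioc (primeSeq c) (primeSeq (c+1)) := by
    simp only [primeSeq, Nat.add_sub_cancel, Finset.mem_Ioc]
    exact ⟨hlt, hle⟩
  have hterm : n ≤ max (normInf (2^n)) (normInf (2^n - 1)) := by
    rw [normInf_two_pow n (by omega)]; exact le_max_left _ _
  have hsum : n ≤ ∑ M ∈ Finset.Ioc (primeSeq c) (primeSeq (c+1)), max (normInf M) (normInf (M - 1)) :=
    le_trans hterm (Finset.single_le_sum (f := fun M => max (normInf M) (normInf (M - 1))) (fun i _ => Nat.zero_le _) hmem)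
  unfold D1
  omega
end

section
/- For every k ≥ 1, 𝒟¹_k ≠ 3 and 𝒟¹_k ≠ 5. -/
/-!
Write `f M = max ‖M‖_∞ ‖M - 1‖_∞` (`linfSummand`), so that `𝒟¹_k = ∑_{p < M ≤ q} f M` for
consecutive primes `p < q`, and `f M ≥ 1` for every `M ≥ 2`. For `k = 1` the sum is `f 3 = 1`.
For twin primes `q = p + 2` both summands equal `‖p + 1‖_∞`, so the sum is even. Otherwise
`q ≥ p + 4` with `p` odd, so one of `p + 1`, `p + 3` is a multiple `e` of `4` with `e + 1 ≤ q`;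
then `f e, f (e + 1) ≥ 2` and the sum is at least `(q - p) + 2 ≥ 6`.
-/

open scoped Classical
open Filter

theorem factorization_le_normInf (N p : ℕ) : N.factorization p ≤ normInf N := by
  by_cases hp : p ∈ N.factorization.support
  · exact Finset.le_sup (f := fun p => N.factorization p) hp
  · rw [Finsupp.notMem_support_iff.mp hp]
    exact Nat.zero_le _

theorem normInf_prime {q : ℕ} (hq : q.Prime) : normInf q = 1 := by
  simp [normInf, hq.factorization]

theorem one_le_normInf {N : ℕ} (hN : 2 ≤ N) : 1 ≤ normInf N := by
  have hp := Nat.minFac_prime (by omega : N ≠ 1)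
  exact (hp.factorization_pos_of_dvd (by omega) N.minFac_dvd).trans_le
    (factorization_le_normInf N N.minFac)

theorem two_le_normInf_of_sq_dvd {N p : ℕ} (hp : p.Prime) (hN : N ≠ 0) (h : p ^ 2 ∣ N) :
    2 ≤ normInf N :=
  ((hp.pow_dvd_iff_le_factorization hN).mp h).trans (factorization_le_normInf N p)

noncomputable def linfSummand (M : ℕ) : ℕ := max (normInf M) (normInf (M - 1))

theorem Linf_eq_sum_Ioc (N : ℕ) : Linf N = ∑ M ∈ Finset.Ioc 1 N, linfSummand M := by
  rw [Linf, ← Finset.Icc_add_one_left_eq_Ioc]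
  rfl

theorem Linf_sub_Linf {p q : ℕ} (hp : 1 ≤ p) (hpq : p ≤ q) :
    Linf q - Linf p = ∑ M ∈ Finset.Ioc p q, linfSummand M := by
  rw [Linf_eq_sum_Ioc, Linf_eq_sum_Ioc, ← Finset.sum_Ioc_consecutive _ hp hpq,
    Nat.add_sub_cancel_left]

theorem card_le_sum_linfSummand {s : Finset ℕ} (hs : ∀ M ∈ s, 2 ≤ M) :
    s.card ≤ ∑ M ∈ s, linfSummand M := by
  simpa using s.card_nsmul_le_sum linfSummand 1 fun M hM =>
    (one_le_normInf (hs M hM)).trans (le_max_left _ _)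

theorem sum_linfSummand_Ioc_add_two {p : ℕ} (hp : normInf p = 1) (hp₂ : normInf (p + 2) = 1)
    (h : 1 ≤ p) : ∑ M ∈ Finset.Ioc p (p + 2), linfSummand M = 2 * normInf (p + 1) := by
  have hmid : 1 ≤ normInf (p + 1) := one_le_normInf (by omega)
  rw [Finset.sum_Ioc_succ_top (by omega), Finset.sum_Ioc_succ_top le_rfl, Finset.Ioc_self,
    Finset.sum_empty]
  simp only [linfSummand, Nat.add_sub_cancel, hp, hp₂]
  omega

theorem six_le_sum_linfSummand_Ioc {p q : ℕ} (hp : p % 2 = 1) (hpq : p + 4 ≤ q) :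
    6 ≤ ∑ M ∈ Finset.Ioc p q, linfSummand M := by
  obtain ⟨e, he4, hpe, heq⟩ : ∃ e, 4 ∣ e ∧ p < e ∧ e + 1 ≤ q := by
    rcases (by omega : p % 4 = 1 ∨ p % 4 = 3) with h | h
    · exact ⟨p + 3, by omega, by omega, by omega⟩
    · exact ⟨p + 1, by omega, by omega, by omega⟩
  have hsq : 2 ≤ normInf e :=
    two_le_normInf_of_sq_dvd Nat.prime_two (by omega) (by norm_num; exact he4)
  have hsub : {e, e + 1} ⊆ Finset.Ioc p q := by
    intro M hM
    simp only [Finset.mem_insert, Finset.mem_singleton] at hM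
    rw [Finset.mem_Ioc]
    omega
  have hrest : q - p - 2 ≤ ∑ M ∈ Finset.Ioc p q \ {e, e + 1}, linfSummand M := by
    refine le_trans ?_ (card_le_sum_linfSummand fun M hM => ?_)
    · rw [Finset.card_sdiff_of_subset hsub, Nat.card_Ioc, Finset.card_pair (by omega)]
    · have := Finset.mem_Ioc.mp (Finset.mem_sdiff.mp hM).1
      omega
  have hpair : 4 ≤ linfSummand e + linfSummand (e + 1) := by
    have h₁ : 2 ≤ linfSummand e := hsq.trans (le_max_left _ _)
    have h₂ : 2 ≤ linfSummand (e + 1) := hsq.trans (le_max_right _ _)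
    omega
  rw [← Finset.sum_sdiff hsub, Finset.sum_pair (by omega)]
  omega

theorem primeSeq_prime (k : ℕ) : (primeSeq k).Prime := Nat.prime_nth_prime _

theorem primeSeq_lt_primeSeq {k l : ℕ} (hk : 1 ≤ k) (hkl : k < l) : primeSeq k < primeSeq l :=
  Nat.nth_strictMono Nat.infinite_setOfPred_prime (by omega)

theorem primeSeq_one : primeSeq 1 = 2 := Nat.nth_prime_zero_eq_two

theorem primeSeq_two : primeSeq 2 = 3 := Nat.nth_prime_one_eq_three

theorem primeSeq_mod_two {k : ℕ} (hk : 2 ≤ k) : primeSeq k % 2 = 1 := by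
  have h2 : 2 < primeSeq k := primeSeq_one ▸ primeSeq_lt_primeSeq le_rfl (by omega)
  exact Nat.odd_iff.mp ((primeSeq_prime k).odd_of_ne_two h2.ne')

theorem stmt_16 : ∀ k : ℕ, 1 ≤ k → D1 k ≠ 3 ∧ D1 k ≠ 5 := by
  intro k hk
  set p := primeSeq k
  set q := primeSeq (k + 1)
  have hpq : p < q := primeSeq_lt_primeSeq hk (by omega)
  have hD : D1 k = ∑ M ∈ Finset.Ioc p q, linfSummand M :=
    Linf_sub_Linf (primeSeq_prime k).one_lt.le hpq.le
  rcases hk.eq_or_lt with rfl | hk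
  · have : D1 1 = 1 := by
      rw [hD, show p = 2 from primeSeq_one, show q = 3 from primeSeq_two]
      simp [linfSummand, normInf_prime Nat.prime_three, normInf_prime Nat.prime_two]
    omega
  have hp : p % 2 = 1 := primeSeq_mod_two hk
  have hq : q % 2 = 1 := primeSeq_mod_two (by omega)
  rcases (by omega : q = p + 2 ∨ p + 4 ≤ q) with htwin | hgap
  · have : D1 k = 2 * normInf (p + 1) := by
      rw [hD, htwin, sum_linfSummand_Ioc_add_two (normInf_prime (primeSeq_prime k))
        (htwin ▸ normInf_prime (primeSeq_prime (k + 1))) (by omega)]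
    omega
  · have := six_le_sum_linfSummand_Ioc hp hgap
    omega
end
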